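/- For every odd positive integer d, s(d) ≤ d · ∏_{p ∣ d} (1 + 1/p), where s(d) is the number of pairs (u, v) modulo d with gcd(uv, d) = 1 and u² + v² ≡ −1 (mod d), and the product ranges over primes dividing d. -/

import Mathlib

/-!
By the Chinese remainder theorem, `s` is multiplicative, so it suffices to bound it at odd
prime powers. Modulo a prime `p`, the solutions lie on the affine conic `x² + y² = -1`, which has
at most `p + 1` points: projecting from one point `P₀` of the conic sends the remaining points
injectively to the projective line with the tangent direction at `P₀` removed. Going from `p ^ k`
to `p ^ (k + 1)` multiplies the count by at most `p`: a solution is determined by its reduction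
modulo `p ^ k` together with the lift of `u`, since two lifts `v, v'` of one class with
`v² = v'²` differ by some `ε` with `ε² = 0`, hence `2 v ε = 0` and `ε = 0`. Altogether
`s (p ^ (k + 1)) ≤ p ^ k (p + 1)`.
-/

/-- `s d` counts pairs `(u, v)` with `1 ≤ u, v ≤ d`, `gcd(u,d) = gcd(v,d) = 1`
and `u² + v² + 1 ≡ 0 (mod d)`. -/
def s (d : ℕ) : ℕ :=
  ((Finset.Icc 1 d ×ˢ Finset.Icc 1 d).filter
    (fun p => Nat.gcd p.1 d = 1 ∧ Nat.gcd p.2 d = 1 ∧ (p.1 ^ 2 + p.2 ^ 2 + 1) % d = 0)).card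

open scoped LinearAlgebra.Projectivization

section Conic
variable {F : Type*} [Field F]

lemma chord_sq_add_sq {a b x y : F} (h0 : a ^ 2 + b ^ 2 + 1 = 0) (h : x ^ 2 + y ^ 2 + 1 = 0) :
    (x - a) ^ 2 + (y - b) ^ 2 = -2 * (a * (x - a) + b * (y - b)) := by
  linear_combination h - h0

lemma chord_sq_add_sq_ne_zero {a b x y : F} (h2 : (2 : F) ≠ 0) (h0 : a ^ 2 + b ^ 2 + 1 = 0)
    (h : x ^ 2 + y ^ 2 + 1 = 0) (hne : (x, y) ≠ (a, b)) : (x - a) ^ 2 + (y - b) ^ 2 ≠ 0 := by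
  intro hQ
  have hB : a * (x - a) + b * (y - b) = 0 := by
    simpa [hQ, h2] using (chord_sq_add_sq h0 h).symm
  have hx : (x - a) ^ 2 = 0 := by
    linear_combination (x - a) ^ 2 * h0 - b ^ 2 * hQ - (a * (x - a) - b * (y - b)) * hB
  have hy : (y - b) ^ 2 = 0 := by linear_combination hQ - hx
  exact hne (Prod.ext (sub_eq_zero.mp (pow_eq_zero_iff two_ne_zero |>.mp hx))
    (sub_eq_zero.mp (pow_eq_zero_iff two_ne_zero |>.mp hy)))

lemma eq_of_sub_eq_smul_sub {a b x y x' y' c : F} (h2 : (2 : F) ≠ 0)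
    (h0 : a ^ 2 + b ^ 2 + 1 = 0) (h : x ^ 2 + y ^ 2 + 1 = 0) (h' : x' ^ 2 + y' ^ 2 + 1 = 0)
    (hne' : (x', y') ≠ (a, b)) (hc : c ≠ 0) (hxy : (x - a, y - b) = c • (x' - a, y' - b)) :
    (x, y) = (x', y') := by
  simp only [Prod.smul_mk, smul_eq_mul, Prod.mk.injEq] at hxy
  obtain ⟨hx, hy⟩ := hxy
  have hQ' := chord_sq_add_sq_ne_zero h2 h0 h' hne'
  -- the chord relation has degrees 2 and 1 in the direction vector, so only `c = 1` keeps it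
  have : c * (c - 1) * ((x' - a) ^ 2 + (y' - b) ^ 2) = 0 := by
    linear_combination chord_sq_add_sq h0 h - c * chord_sq_add_sq h0 h'
      - (x - a + c * (x' - a) + 2 * a) * hx - (y - b + c * (y' - b) + 2 * b) * hy
  have hc1 : c = 1 := by simpa [hc, hQ', sub_eq_zero] using this
  subst hc1
  simp only [one_mul, sub_left_inj] at hx hy
  rw [hx, hy]

lemma sub_ne_smul_tangent {a b x y c : F} (h2 : (2 : F) ≠ 0) (h0 : a ^ 2 + b ^ 2 + 1 = 0)
    (h : x ^ 2 + y ^ 2 + 1 = 0) (hne : (x, y) ≠ (a, b)) : (x - a, y - b) ≠ c • (-b, a) := by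
  intro hxy
  simp only [Prod.smul_mk, smul_eq_mul, Prod.mk.injEq] at hxy
  apply chord_sq_add_sq_ne_zero h2 h0 h hne
  rw [chord_sq_add_sq h0 h, hxy.1, hxy.2]
  ring

lemma card_conic_le [Finite F] (h2 : (2 : F) ≠ 0) :
    Nat.card {P : F × F | P.1 ^ 2 + P.2 ^ 2 + 1 = 0} ≤ Nat.card F + 1 := by
  set C := {P : F × F | P.1 ^ 2 + P.2 ^ 2 + 1 = 0}
  rcases C.eq_empty_or_nonempty with hC | ⟨P0, hP0⟩
  · simp [hC]
  have hP0' : P0.1 ^ 2 + P0.2 ^ 2 + 1 = 0 := hP0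
  let tangent : ℙ F (F × F) := .mk F (-P0.2, P0.1) fun h => by
    obtain ⟨hb, ha⟩ := Prod.ext_iff.mp h
    simp only [Prod.fst_zero, Prod.snd_zero, neg_eq_zero] at ha hb
    simp [ha, hb] at hP0'
  let dir : ↥(C \ {P0}) → ↥((Set.univ : Set (ℙ F (F × F))) \ {tangent}) := fun P =>
    ⟨.mk F (P - P0) (sub_ne_zero.mpr P.2.2), trivial, fun h => by
      obtain ⟨c, hc⟩ := (Projectivization.mk_eq_mk_iff _ _ _ _ _).mp h
      exact sub_ne_smul_tangent (c := (c : F)) h2 hP0' P.2.1 P.2.2 hc.symm⟩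
  have hdir : Function.Injective dir := fun P Q h => by
    obtain ⟨c, hc⟩ := (Projectivization.mk_eq_mk_iff _ _ _ _ _).mp (congrArg Subtype.val h)
    exact Subtype.ext (eq_of_sub_eq_smul_sub h2 hP0' P.2.1 Q.2.1 Q.2.2 c.ne_zero hc.symm)
  calc Nat.card C = Nat.card ↥(C \ {P0}) + 1 := (Set.ncard_sdiff_singleton_add_one hP0).symm
    _ ≤ Nat.card ↥((Set.univ : Set (ℙ F (F × F))) \ {tangent}) + 1 := by
        gcongr; exact Nat.card_le_card_of_injective dir hdir
    _ = Nat.card F + 1 := by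
        rw [Nat.card_coe_set_eq, Set.ncard_sdiff_singleton_add_one (Set.mem_univ _),
          Set.ncard_univ, Projectivization.card_of_finrank_two F _ (by simp)]

end Conic

def unitSolutions (R : Type*) [CommRing R] : Set (R × R) :=
  {x | IsUnit x.1 ∧ IsUnit x.2 ∧ x.1 ^ 2 + x.2 ^ 2 + 1 = 0}

section CommRing
variable {R S : Type*} [CommRing R] [CommRing S]

lemma card_unitSolutions_congr (e : R ≃+* S) :
    Nat.card (unitSolutions R) = Nat.card (unitSolutions S) :=
  Nat.card_congr <| (e.toEquiv.prodCongr e.toEquiv).subtypeEquiv fun x => by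
    simp only [unitSolutions, Set.mem_ofPred_eq, Equiv.prodCongr_apply, Prod.map_fst,
      Prod.map_snd, RingEquiv.toEquiv_eq_coe, EquivLike.coe_coe, isUnit_map_iff]
    rw [← map_pow, ← map_pow, ← map_add, ← map_one e, ← map_add,
      map_eq_zero_iff e e.injective]

lemma card_unitSolutions_prod :
    Nat.card (unitSolutions (R × S)) =
      Nat.card (unitSolutions R) * Nat.card (unitSolutions S) := by
  rw [← Nat.card_prod]
  refine Nat.card_congr <| ((Equiv.prodProdProdComm R S R S).subtypeEquiv fun x => ?_).trans
    Equiv.subtypeProdEquivProd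
  simp only [unitSolutions, Set.mem_ofPred_eq, Prod.isUnit_iff, Prod.ext_iff,
    Equiv.prodProdProdComm_apply, Prod.fst_add, Prod.snd_add,
    Prod.fst_one, Prod.snd_one, Prod.fst_zero, Prod.snd_zero]
  tauto

lemma eq_of_sq_eq_of_sub_sq_eq_zero {x y : R} (h2 : IsUnit (2 : R)) (hx : IsUnit x)
    (hsq : x ^ 2 = y ^ 2) (hsub : (x - y) ^ 2 = 0) : x = y := by
  have : 2 * x * (x - y) = 0 := by linear_combination hsq + hsub
  exact sub_eq_zero.mp ((h2.mul hx).mul_right_eq_zero.mp this)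

end CommRing

lemma card_unitSolutions_zmod_mul {m n : ℕ} (h : m.Coprime n) :
    Nat.card (unitSolutions (ZMod (m * n))) =
      Nat.card (unitSolutions (ZMod m)) * Nat.card (unitSolutions (ZMod n)) := by
  rw [card_unitSolutions_congr (ZMod.chineseRemainder h), card_unitSolutions_prod]

namespace ZMod

lemma natCast_val_sub_one_add_one {d : ℕ} [NeZero d] (y : ZMod d) :
    (((y - 1).val + 1 : ℕ) : ZMod d) = y := by
  simp

lemma val_natCast_sub_one_add_one {d a : ℕ} (ha : a ∈ Finset.Icc 1 d) :
    ((a : ZMod d) - 1).val + 1 = a := by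
  rw [Finset.mem_Icc] at ha
  rw [← Nat.cast_one, ← Nat.cast_sub ha.1, val_natCast_of_lt (by omega)]
  omega

lemma val_sub_one_add_one_mem_Icc {d : ℕ} [NeZero d] (y : ZMod d) :
    (y - 1).val + 1 ∈ Finset.Icc 1 d := by
  have := (y - 1).val_lt
  rw [Finset.mem_Icc]
  omega

lemma isUnit_two_of_odd {n : ℕ} (hn : Odd n) : IsUnit (2 : ZMod n) := by
  exact_mod_cast (isUnit_iff_coprime 2 n).mpr (Nat.coprime_two_left.mpr hn)

lemma eq_of_cast_eq_of_val_div_eq {m n : ℕ} [NeZero n] {z w : ZMod n}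
    (hcast : (cast z : ZMod m) = cast w) (hdiv : z.val / m = w.val / m) : z = w := by
  rw [cast_eq_val, cast_eq_val, natCast_eq_natCast_iff'] at hcast
  apply val_injective
  rw [← Nat.div_add_mod z.val m, ← Nat.div_add_mod w.val m, hcast, hdiv]

lemma sq_eq_zero_of_cast_eq_zero {m n : ℕ} [NeZero n] (hnm : n ∣ m ^ 2) {z : ZMod n}
    (hz : (cast z : ZMod m) = 0) : z ^ 2 = 0 := by
  rw [cast_eq_val, natCast_eq_zero_iff] at hz
  obtain ⟨t, ht⟩ := hz
  rw [← natCast_zmod_val z, ht, Nat.cast_mul, mul_pow, ← Nat.cast_pow,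
    (natCast_eq_zero_iff _ _).mpr hnm, zero_mul]

end ZMod

lemma mem_unitSolutions_natCast_iff {d : ℕ} (a b : ℕ) :
    ((a : ZMod d), (b : ZMod d)) ∈ unitSolutions (ZMod d) ↔
      a.gcd d = 1 ∧ b.gcd d = 1 ∧ (a ^ 2 + b ^ 2 + 1) % d = 0 := by
  simp only [unitSolutions, Set.mem_ofPred_eq, ZMod.isUnit_iff_coprime, Nat.Coprime,
    ← Nat.dvd_iff_mod_eq_zero, ← ZMod.natCast_eq_zero_iff]
  push_cast
  rfl

lemma s_eq_card_unitSolutions (d : ℕ) [NeZero d] : s d = Nat.card (unitSolutions (ZMod d)) := by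
  classical
  rw [s, Nat.card_eq_card_toFinset]
  refine Finset.card_nbij' (fun x => ((x.1 : ZMod d), (x.2 : ZMod d)))
    (fun y => ((y.1 - 1).val + 1, (y.2 - 1).val + 1)) ?_ ?_ ?_ ?_
  · intro x hx
    simp only [Finset.coe_filter, Finset.mem_product, Set.mem_ofPred_eq] at hx
    simpa [mem_unitSolutions_natCast_iff] using hx.2
  · intro y hy
    simp only [Finset.coe_filter, Finset.mem_product, Set.mem_ofPred_eq]
    refine ⟨⟨ZMod.val_sub_one_add_one_mem_Icc _, ZMod.val_sub_one_add_one_mem_Icc _⟩, ?_⟩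
    rw [← mem_unitSolutions_natCast_iff, ZMod.natCast_val_sub_one_add_one,
      ZMod.natCast_val_sub_one_add_one]
    simpa using hy
  · intro x hx
    simp only [Finset.coe_filter, Finset.mem_product, Set.mem_ofPred_eq] at hx
    exact Prod.ext (ZMod.val_natCast_sub_one_add_one hx.1.1)
      (ZMod.val_natCast_sub_one_add_one hx.1.2)
  · intro y _
    exact Prod.ext (ZMod.natCast_val_sub_one_add_one y.1) (ZMod.natCast_val_sub_one_add_one y.2)

lemma card_unitSolutions_le_of_dvd_sq {m n : ℕ} (hmn : m ∣ n) (hnm : n ∣ m ^ 2)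
    (hn : Odd n) :
    Nat.card (unitSolutions (ZMod n)) ≤ n / m * Nat.card (unitSolutions (ZMod m)) := by
  have : NeZero n := ⟨hn.pos.ne'⟩
  have : NeZero m := ⟨ne_zero_of_dvd_ne_zero hn.pos.ne' hmn⟩
  let π := ZMod.castHom hmn (ZMod m)
  let f : unitSolutions (ZMod n) → Fin (n / m) × unitSolutions (ZMod m) := fun x =>
    (⟨x.1.1.val / m, Nat.div_lt_div_of_lt_of_dvd hmn (ZMod.val_lt _)⟩,
      ⟨(π x.1.1, π x.1.2), x.2.1.map π, x.2.2.1.map π, by simpa using congrArg π x.2.2.2⟩)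
  rw [← Nat.card_fin (n / m), ← Nat.card_prod]
  refine Nat.card_le_card_of_injective f fun x y hxy => ?_
  obtain ⟨hdiv, hπ⟩ := Prod.ext_iff.mp hxy
  obtain ⟨hπ1, hπ2⟩ := Prod.ext_iff.mp (Subtype.ext_iff.mp hπ)
  have h1 : x.1.1 = y.1.1 := ZMod.eq_of_cast_eq_of_val_div_eq hπ1 (Fin.ext_iff.mp hdiv)
  have h2 : x.1.2 = y.1.2 := by
    refine eq_of_sq_eq_of_sub_sq_eq_zero (ZMod.isUnit_two_of_odd hn) x.2.2.1
      (by linear_combination x.2.2.2 - y.2.2.2 - (x.1.1 + y.1.1) * h1)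
      (ZMod.sq_eq_zero_of_cast_eq_zero hnm ?_)
    rw [← ZMod.castHom_apply (h := hmn), map_sub]
    exact sub_eq_zero.mpr hπ2
  exact Subtype.ext (Prod.ext h1 h2)

lemma card_unitSolutions_zmod_prime_pow_le {p : ℕ} (hp : p.Prime) (hodd : Odd p) (k : ℕ) :
    Nat.card (unitSolutions (ZMod (p ^ (k + 1)))) ≤ p ^ k * (p + 1) := by
  have := Fact.mk hp
  induction k with
  | zero =>
    rw [pow_zero, one_mul, zero_add, pow_one]
    calc Nat.card (unitSolutions (ZMod p))
        ≤ Nat.card {P : ZMod p × ZMod p | P.1 ^ 2 + P.2 ^ 2 + 1 = 0} :=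
          Nat.card_mono (Set.toFinite _) fun x hx => hx.2.2
      _ ≤ Nat.card (ZMod p) + 1 := card_conic_le (ZMod.isUnit_two_of_odd hodd).ne_zero
      _ = p + 1 := by rw [Nat.card_zmod]
  | succ k ih =>
    calc Nat.card (unitSolutions (ZMod (p ^ (k + 2))))
        ≤ p ^ (k + 2) / p ^ (k + 1) * Nat.card (unitSolutions (ZMod (p ^ (k + 1)))) :=
          card_unitSolutions_le_of_dvd_sq (pow_dvd_pow p (by omega))
            (by rw [← pow_mul]; exact pow_dvd_pow p (by omega)) hodd.pow
      _ ≤ p * (p ^ k * (p + 1)) := by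
          rw [pow_succ p (k + 1), Nat.mul_div_cancel_left _ (pow_pos hp.pos _)]
          gcongr
      _ = p ^ (k + 1) * (p + 1) := by ring

lemma card_unitSolutions_zmod_le {d : ℕ} (hodd : Odd d) :
    (Nat.card (unitSolutions (ZMod d)) : ℝ) ≤
      d * ∏ p ∈ d.primeFactors, (1 + 1 / (p : ℝ)) := by
  induction d using Nat.recOnPosPrimePosCoprime with
  | zero => simp at hodd
  | one => simp [Set.subsingleton_of_subsingleton]
  | prime_pow p n hp hn =>
    obtain ⟨k, rfl⟩ := Nat.exists_eq_add_one_of_ne_zero hn.ne'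
    have hpodd : Odd p := (Nat.odd_pow_iff k.succ_ne_zero).mp hodd
    rw [Nat.primeFactors_prime_pow k.succ_ne_zero hp, Finset.prod_singleton]
    calc (Nat.card (unitSolutions (ZMod (p ^ (k + 1)))) : ℝ) ≤ (p ^ k * (p + 1) : ℕ) := by
          exact_mod_cast card_unitSolutions_zmod_prime_pow_le hp hpodd k
      _ = _ := by
          have : (p : ℝ) ≠ 0 := by exact_mod_cast hp.ne_zero
          push_cast
          field_simp
          ring
  | coprime a b ha hb hab iha ihb =>
    obtain ⟨hao, hbo⟩ := Nat.odd_mul.mp hodd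
    rw [card_unitSolutions_zmod_mul hab, hab.primeFactors_mul,
      Finset.prod_union hab.disjoint_primeFactors]
    push_cast
    calc _ ≤ (a * ∏ p ∈ a.primeFactors, (1 + 1 / (p : ℝ))) *
          (b * ∏ p ∈ b.primeFactors, (1 + 1 / (p : ℝ))) :=
          mul_le_mul (iha hao) (ihb hbo) (by positivity) (by positivity)
      _ = _ := by ring

theorem stmt_8_general (d : ℕ) (hodd : Odd d) :
    (s d : ℝ) ≤ (d : ℝ) * ∏ p ∈ d.primeFactors, (1 + 1 / (p : ℝ)) := by
  have : NeZero d := ⟨hodd.pos.ne'⟩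
  rw [s_eq_card_unitSolutions]
  exact card_unitSolutions_zmod_le hodd

theorem stmt_8 (d : ℕ) (hd : 0 < d) (hodd : Odd d) :
    (s d : ℝ) ≤ (d : ℝ) * ∏ p ∈ d.primeFactors, (1 + 1 / (p : ℝ)) :=
  stmt_8_general d hodd
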